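/- arXiv:1405.6160 — 3 statements merged into one kernel-verified Lean document; each statement's English description precedes it below -/
import Mathlib

section
/- Let X be the weighted magnetization X = π_{01}^{-1}(P_T(σ_x = 1 | σ(L))/α - 1) where π_{01} = (1-α)/α. Then E_T^1(X) = π_{01}·E_T(X²) and E_T^0(X) = -E_T(X²). -/
/-!
The magnetization is a function of the boundary, and `q (L x)` is the conditional probability
of an occupied root given the boundary, so `E[1_{σ_x = 1} X] = E[q(L) X]` (tower property).
Unfolding the definition of `X` gives `q(L) = α + (1 - α) X`; hence `E[X] = 0` because
`E[q(L)] = α`, and then `E[1_{σ_x = 1} X] = (1 - α) E[X²]`. The statement about `E_T^0` follows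
from `E[X] = 0`.
-/

open Finset

theorem sum_mul_comp_eq_sum_fiber {Ω B : Type*} [Fintype B] [DecidableEq B] (s : Finset Ω)
    (w : Ω → ℝ) (L : Ω → B) (g : B → ℝ) :
    ∑ x ∈ s, w x * g (L x) = ∑ A, (∑ x ∈ s with L x = A, w x) * g A := by
  rw [← sum_fiberwise s L]
  refine sum_congr rfl fun A _ => ?_
  rw [sum_mul]
  exact sum_congr rfl fun x hx => by rw [(mem_filter.mp hx).2]

theorem sum_filter_mul_comp_eq_sum_mul_cond {Ω B : Type*} [Fintype Ω] [Fintype B]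
    [DecidableEq B] (w : Ω → ℝ) (L : Ω → B) (p : Ω → Prop) [DecidablePred p] (q : B → ℝ) (hfiber : ∀ A, ∑ x with L x = A, w x ≠ 0)
    (hq : ∀ A, q A = (∑ x with L x = A ∧ p x, w x) / ∑ x with L x = A, w x) (g : B → ℝ) :
    ∑ x with p x, w x * g (L x) = ∑ x, w x * (q (L x) * g (L x)) := by
  simp only [← mul_assoc]
  rw [sum_mul_comp_eq_sum_fiber, sum_mul_comp_eq_sum_fiber univ (fun x => w x * q (L x)) L]
  refine sum_congr rfl fun A _ => ?_
  have hfib : ∑ x with L x = A, w x * q (L x) = (∑ x with L x = A, w x) * q A :=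
    (sum_congr rfl fun x hx => by rw [(mem_filter.mp hx).2]).trans (sum_mul ..).symm
  rw [filter_filter, hfib, hq A, mul_div_cancel₀ _ (hfiber A)]
  simp only [and_comm]

theorem magnetization_conditional_means_general
    {Ω B : Type*} [Fintype Ω] [Fintype B] [DecidableEq B]
    (w : Ω → ℝ) (hw1 : ∑ x, w x = 1)
    (r : Ω → Bool) (L : Ω → B) (α : ℝ)
    (hα : α = ∑ x ∈ univ.filter (fun x => r x = true), w x)
    (hα0 : 0 < α) (hα1 : α < 1)
    (hfiber : ∀ A : B, 0 < ∑ x ∈ univ.filter (fun x => L x = A), w x)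
    -- posterior probability that the root is occupied given boundary configuration A
    (q : B → ℝ)
    (hq : ∀ A : B, q A = (∑ x ∈ univ.filter (fun x => L x = A ∧ r x = true), w x)
        / (∑ x ∈ univ.filter (fun x => L x = A), w x))
    -- the weighted magnetization as a function of the configuration
    (X : Ω → ℝ)
    (hX : ∀ x, X x = ((1 - α)/α)⁻¹ * (q (L x) / α - 1)) :
    (∑ x ∈ univ.filter (fun x => r x = true), w x * X x) / α
        = ((1 - α)/α) * ∑ x, w x * (X x)^2
    ∧ (∑ x ∈ univ.filter (fun x => r x = false), w x * X x) / (1 - α)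
        = -(∑ x, w x * (X x)^2) := by
  have hα1' : 1 - α ≠ 0 := sub_ne_zero.mpr hα1.ne'
  have tower := sum_filter_mul_comp_eq_sum_mul_cond w L (fun x => r x = true) q
    (fun A => (hfiber A).ne') hq
  have hqX : ∀ x, q (L x) = (1 - α) * X x + α := fun x => by
    rw [hX]; field_simp; ring
  have hmean : ∑ x, w x * X x = 0 := by
    have hq_mean : ∑ x, w x * q (L x) = α := by simpa [← hα] using (tower fun _ => 1).symm
    have hq_affine : ∑ x, w x * q (L x) = (1 - α) * ∑ x, w x * X x + α := by
      simp only [hqX, mul_add, sum_add_distrib, ← sum_mul, hw1, one_mul, mul_left_comm _ (1 - α),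
        ← mul_sum]
    have : (1 - α) * ∑ x, w x * X x = 0 := by linarith
    exact (mul_eq_zero.mp this).resolve_left hα1'
  have hocc : ∑ x ∈ univ.filter (fun x => r x = true), w x * X x
      = (1 - α) * ∑ x, w x * X x ^ 2 := by
    obtain ⟨f, hf⟩ : ∃ f : B → ℝ, ∀ x, X x = f (L x) :=
      ⟨fun A => ((1 - α)/α)⁻¹ * (q A / α - 1), hX⟩
    calc _ = ∑ x, w x * (q (L x) * X x) := by simpa only [← hf] using tower f
      _ = (1 - α) * ∑ x, w x * X x ^ 2 + α * ∑ x, w x * X x := by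
        simp only [hqX, mul_sum, ← sum_add_distrib]
        exact sum_congr rfl fun x _ => by ring
      _ = _ := by rw [hmean, mul_zero, add_zero]
  have hvac : ∑ x ∈ univ.filter (fun x => r x = false), w x * X x
      = -((1 - α) * ∑ x, w x * X x ^ 2) := by
    have hsplit := sum_filter_add_sum_filter_not univ (fun x => r x = true) (fun x => w x * X x)
    simp only [Bool.not_eq_true, hocc, hmean] at hsplit
    linarith
  constructor
  · rw [hocc]; field_simp
  · rw [hvac]; field_simp

/-- For the weighted magnetization X = π₀₁⁻¹ (P_T(σ_x = 1 | σ(L))/α - 1) of the root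
of a finite tree under the hardcore Gibbs measure, with π₀₁ = (1-α)/α:
E_T^1(X) = π₀₁ · E_T(X²) and E_T^0(X) = -E_T(X²). -/
theorem magnetization_conditional_means
    {Ω B : Type*} [Fintype Ω] [Fintype B] [DecidableEq B]
    (w : Ω → ℝ) (hw : ∀ x, 0 ≤ w x) (hw1 : ∑ x, w x = 1)
    (r : Ω → Bool) (L : Ω → B) (α : ℝ)
    (hα : α = ∑ x ∈ univ.filter (fun x => r x = true), w x)
    (hα0 : 0 < α) (hα1 : α < 1)
    (hfiber : ∀ A : B, 0 < ∑ x ∈ univ.filter (fun x => L x = A), w x)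
    -- posterior probability that the root is occupied given boundary configuration A
    (q : B → ℝ)
    (hq : ∀ A : B, q A = (∑ x ∈ univ.filter (fun x => L x = A ∧ r x = true), w x)
        / (∑ x ∈ univ.filter (fun x => L x = A), w x))
    -- the weighted magnetization as a function of the configuration
    (X : Ω → ℝ)
    (hX : ∀ x, X x = ((1 - α)/α)⁻¹ * (q (L x) / α - 1)) :
    (∑ x ∈ univ.filter (fun x => r x = true), w x * X x) / α
        = ((1 - α)/α) * ∑ x, w x * (X x)^2
    ∧ (∑ x ∈ univ.filter (fun x => r x = false), w x * X x) / (1 - α)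
        = -(∑ x, w x * (X x)^2) :=
  magnetization_conditional_means_general w hw1 r L α hα hα0 hα1 hfiber q hq X hX
end

section
/- For any 0 < α < 1/2, define γ̂ = α², ε̂ = α(1-2α), and let f(α,γ,ε) = 2α·ln λ + H(α) + H₁(γ,α) + H₁(α-γ, 1-α) + d·Ψ₂(α,γ,ε) where H₁(x,y) = -x(ln x - ln y) + (x-y)(ln(y-x) - ln y) and Ψ₂ is given by the explicit integral formula. Then f(α, γ̂, ε̂) = 2Φ(α), where Φ(α) = H(α) + α·ln λ + d·((1-α)ln(1-α) - ((1-2α)/2)ln(1-2α)). -/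
open Real

noncomputable def hardcoreH (x : ℝ) : ℝ := -x * log x - (1 - x) * log (1 - x)

noncomputable def hardcoreH1 (x y : ℝ) : ℝ :=
  -x * (log x - log y) + (x - y) * (log (y - x) - log y)

noncomputable def hardcorePsi2 (α γ ε : ℝ) : ℝ :=
  hardcoreH1 ε (α - γ)
  + (∫ x in (0:ℝ)..γ, log (1 - 2*α + γ - x)) - (∫ x in (0:ℝ)..γ, log (1 - 2*x))
  + (∫ x in (0:ℝ)..ε, log (1 - 2*α - x))
  + (∫ x in (0:ℝ)..(α - γ - ε), log (α - γ - x))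
  - (∫ x in (0:ℝ)..(α - γ), log (1 - 2*γ - 2*x))
  + (∫ x in (0:ℝ)..ε, log (1 - 2*α - ε - x))
  - (∫ x in (0:ℝ)..ε, log (1 - 2*α - 2*x))

noncomputable def hardcoreF (lam : ℝ) (d : ℕ) (α γ ε : ℝ) : ℝ :=
  2*α * log lam + hardcoreH α + hardcoreH1 γ α + hardcoreH1 (α - γ) (1 - α)
    + d * hardcorePsi2 α γ ε

noncomputable def hardcorePhi (lam : ℝ) (d : ℕ) (α : ℝ) : ℝ :=
  hardcoreH α + α * log lam +
    d * ((1 - α) * log (1 - α) - ((1 - 2*α)/2) * log (1 - 2*α))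

/-! Write `η x = -x log x` (`Real.negMulLog`). The integrals of `log` in `Ψ₂` are differences of
values of `η`, after which `Ψ₂` collapses to a combination of five values of `η`; `H` and `H₁` are
such combinations as well. At `γ̂ = α²`, `ε̂ = α(1-2α)` every argument factors over `α`, `1-α`,
`1-2α`, and `η(xy) = y η(x) + x η(y)` reduces both sides to the same combination of
`η α`, `η (1-α)`, `η (1-2α)`. -/

lemma integral_log_sub (c t : ℝ) :
    ∫ x in (0:ℝ)..t, log (c - x) = negMulLog (c - t) - negMulLog c - t := by
  rw [intervalIntegral.integral_comp_sub_left (fun x => log x) c, sub_zero, integral_log]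
  simp only [negMulLog]
  ring

lemma integral_log_sub_two_mul (c t : ℝ) :
    ∫ x in (0:ℝ)..t, log (c - 2 * x) = (negMulLog (c - 2 * t) - negMulLog c) / 2 - t := by
  rw [intervalIntegral.integral_comp_mul_left (fun y => log (c - y)) two_ne_zero, mul_zero,
    integral_log_sub, smul_eq_mul]
  ring

lemma hardcoreH_eq_negMulLog (x : ℝ) : hardcoreH x = negMulLog x + negMulLog (1 - x) := by
  simp only [hardcoreH, negMulLog]
  ring

lemma hardcoreH1_eq_negMulLog (x y : ℝ) :
    hardcoreH1 x y = negMulLog x + negMulLog (y - x) - negMulLog y := by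
  simp only [hardcoreH1, negMulLog]
  ring

lemma hardcoreH1_mul_left (x y : ℝ) : hardcoreH1 (x * y) y = y * hardcoreH x := by
  rw [hardcoreH1_eq_negMulLog, hardcoreH_eq_negMulLog, show y - x * y = (1 - x) * y by ring,
    negMulLog_mul, negMulLog_mul]
  ring

lemma hardcorePsi2_eq_negMulLog (α γ ε : ℝ) :
    hardcorePsi2 α γ ε = 2 * negMulLog ε + negMulLog (α - γ - ε) - 2 * negMulLog (α - γ)
      - negMulLog (1 - 2 * α + γ) + negMulLog (1 - 2 * α - 2 * ε) / 2 := by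
  simp only [hardcorePsi2, hardcoreH1_eq_negMulLog, integral_log_sub, integral_log_sub_two_mul]
  rw [add_sub_cancel_right, sub_sub_cancel, negMulLog_one,
    show 1 - 2 * γ - 2 * (α - γ) = 1 - 2 * α by ring,
    show 1 - 2 * α - ε - ε = 1 - 2 * α - 2 * ε by ring]
  ring

lemma hardcorePsi2_at_hat (α : ℝ) :
    hardcorePsi2 α (α ^ 2) (α * (1 - 2 * α)) =
      2 * ((1 - α) * log (1 - α) - (1 - 2 * α) / 2 * log (1 - 2 * α)) := by
  rw [hardcorePsi2_eq_negMulLog, show α - α ^ 2 = α * (1 - α) by ring,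
    show α * (1 - α) - α * (1 - 2 * α) = α * α by ring,
    show 1 - 2 * α + α ^ 2 = (1 - α) * (1 - α) by ring,
    show 1 - 2 * α - 2 * (α * (1 - 2 * α)) = (1 - 2 * α) * (1 - 2 * α) by ring]
  simp only [negMulLog_mul]
  simp only [negMulLog]
  ring

theorem hardcoreF_at_hat_eq_two_Phi_general (lam : ℝ) (d : ℕ) (α : ℝ) :
    hardcoreF lam d α (α^2) (α * (1 - 2*α)) = 2 * hardcorePhi lam d α := by
  have hH1 : hardcoreH1 (α ^ 2) α + hardcoreH1 (α - α ^ 2) (1 - α) = hardcoreH α := by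
    rw [show α ^ 2 = α * α by ring, show α - α * α = α * (1 - α) by ring,
      hardcoreH1_mul_left, hardcoreH1_mul_left]
    ring
  rw [hardcoreF, hardcorePhi, hardcorePsi2_at_hat, ← hH1]
  ring

/-- At the product overlap γ̂ = α², ε̂ = α(1-2α), the second-moment rate function f
equals twice the first-moment rate: f(α, γ̂, ε̂) = 2Φ(α). -/
theorem hardcoreF_at_hat_eq_two_Phi (lam : ℝ) (hlam : 0 < lam) (d : ℕ) (hd : 1 ≤ d)
    (α : ℝ) (hα0 : 0 < α) (hα : α < 1/2) :
    hardcoreF lam d α (α^2) (α * (1 - 2*α)) = 2 * hardcorePhi lam d α :=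
  hardcoreF_at_hat_eq_two_Phi_general lam d α
end

section
/- Let I be a finite index set, (X_i)_{i∈I} real random variables with X_i ≥ 0 almost surely, and (a_i)_{i∈I} nonnegative reals. Suppose P(X_i < a_i) ≤ ε for every i ∈ I. Then P(∑_{i∈I} X_i < (1/2)∑_{i∈I} a_i) ≤ 2ε. -/
open MeasureTheory Finset
open scoped ENNReal

/-- If nonnegative random variables X_i satisfy P(X_i < a_i) ≤ ε for each i in a
finite index set I (with a_i ≥ 0), then P(∑ X_i < (1/2)∑ a_i) ≤ 2ε. -/
theorem sum_lower_tail_bound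
    {Ω : Type*} [MeasurableSpace Ω] (μ : Measure Ω) [IsProbabilityMeasure μ]
    {ι : Type*} (I : Finset ι) (X : ι → Ω → ℝ) (a : ι → ℝ) (ε : ℝ≥0∞)
    (hmeas : ∀ i ∈ I, Measurable (X i))
    (ha : ∀ i ∈ I, 0 ≤ a i)
    (hnonneg : ∀ i ∈ I, ∀ᵐ ω ∂μ, 0 ≤ X i ω)
    (htail : ∀ i ∈ I, μ {ω | X i ω < a i} ≤ ε) :
    μ {ω | ∑ i ∈ I, X i ω < (1/2) * ∑ i ∈ I, a i} ≤ 2 * ε := by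
  classical
  set S : ℝ := ∑ i ∈ I, a i with hS
  have hS0 : 0 ≤ S := Finset.sum_nonneg ha
  -- a.e. nonnegativity of all X i, i ∈ I
  have hae : ∀ᵐ ω ∂μ, ∀ i ∈ I, 0 ≤ X i ω := by
    exact (ae_ball_iff I.countable_toSet).2 hnonneg
  by_cases hSz : S = 0
  · -- then the bad event is a.s. empty
    have : μ {ω | ∑ i ∈ I, X i ω < (1/2) * S} = 0 := by
      rw [measure_eq_zero_iff_ae_notMem]
      filter_upwards [hae] with ω hω
      simp only [Set.mem_setOf_eq, hSz, not_lt, mul_zero]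
      exact Finset.sum_nonneg hω
    rw [this]
    exact zero_le
  have hSpos : 0 < S := lt_of_le_of_ne hS0 (Ne.symm hSz)
  -- the auxiliary variable Y
  set Yr : Ω → ℝ := fun ω => ∑ i ∈ I, if X i ω < a i then a i else 0 with hYr
  set Y : Ω → ℝ≥0∞ := fun ω => ENNReal.ofReal (Yr ω) with hY
  have hYmeas : Measurable Y := by
    apply Measurable.ennreal_ofReal
    apply Finset.measurable_sum
    intro i hi
    exact Measurable.ite (measurableSet_lt (hmeas i hi) measurable_const)
      measurable_const measurable_const
  -- integral bound
  have hint : ∫⁻ ω, Y ω ∂μ ≤ ε * ENNReal.ofReal S := by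
    have h1 : ∀ ω, Y ω = ∑ i ∈ I, ENNReal.ofReal (if X i ω < a i then a i else 0) := by
      intro ω
      rw [hY, hYr]
      exact ENNReal.ofReal_sum_of_nonneg (fun i hi => by
        split <;> [exact ha i hi; exact le_refl 0])
    have h2 : ∫⁻ ω, Y ω ∂μ = ∑ i ∈ I, ∫⁻ ω, ENNReal.ofReal (if X i ω < a i then a i else 0) ∂μ := by
      simp_rw [h1]
      exact lintegral_finset_sum I (fun i hi => Measurable.ennreal_ofReal
        (Measurable.ite (measurableSet_lt (hmeas i hi) measurable_const)
          measurable_const measurable_const))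
    rw [h2]
    have h3 : ∀ i ∈ I, ∫⁻ ω, ENNReal.ofReal (if X i ω < a i then a i else 0) ∂μ
        ≤ ENNReal.ofReal (a i) * ε := by
      intro i hi
      have heq : (fun ω => ENNReal.ofReal (if X i ω < a i then a i else 0))
          = Set.indicator {ω | X i ω < a i} (fun _ => ENNReal.ofReal (a i)) := by
        ext ω
        by_cases h : X i ω < a i <;> simp [Set.indicator, h]
      rw [heq, lintegral_indicator (measurableSet_lt (hmeas i hi) measurable_const)]
      simp only [lintegral_const, Measure.restrict_apply MeasurableSet.univ, Set.univ_inter]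
      exact mul_le_mul_right (htail i hi) _
    calc ∑ i ∈ I, ∫⁻ ω, ENNReal.ofReal (if X i ω < a i then a i else 0) ∂μ
        ≤ ∑ i ∈ I, ENNReal.ofReal (a i) * ε := Finset.sum_le_sum h3
      _ = (∑ i ∈ I, ENNReal.ofReal (a i)) * ε := by rw [Finset.sum_mul]
      _ = ENNReal.ofReal S * ε := by rw [hS, ENNReal.ofReal_sum_of_nonneg ha]
      _ = ε * ENNReal.ofReal S := mul_comm _ _
  -- pointwise : bad event a.e. included in {S/2 ≤ Yr}
  have hincl : ∀ᵐ ω ∂μ, ω ∈ {ω | ∑ i ∈ I, X i ω < (1/2) * S} →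
      ENNReal.ofReal (S/2) ≤ Y ω := by
    filter_upwards [hae] with ω hω hbad
    have hbad' : ∑ i ∈ I, X i ω < 1/2 * S := hbad
    have key : S / 2 ≤ Yr ω := by
      have hsplit : (∑ i ∈ I.filter (fun i => X i ω < a i), a i)
          + (∑ i ∈ I.filter (fun i => ¬ X i ω < a i), a i) = S :=
        Finset.sum_filter_add_sum_filter_not I _ a
      have hYreq : Yr ω = ∑ i ∈ I.filter (fun i => X i ω < a i), a i := by
        rw [hYr]; exact (Finset.sum_filter _ _).symm
      have h1 : (∑ i ∈ I.filter (fun i => ¬ X i ω < a i), a i)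
          ≤ ∑ i ∈ I.filter (fun i => ¬ X i ω < a i), X i ω := by
        apply Finset.sum_le_sum
        intro i hi
        simp only [Finset.mem_filter, not_lt] at hi
        exact hi.2
      have h2 : (∑ i ∈ I.filter (fun i => ¬ X i ω < a i), X i ω) ≤ ∑ i ∈ I, X i ω := by
        apply Finset.sum_le_sum_of_subset_of_nonneg (Finset.filter_subset _ _)
        intro i hi _
        exact hω i hi
      linarith [hbad']
    rw [hY]
    exact ENNReal.ofReal_le_ofReal key
  have hmono : μ {ω | ∑ i ∈ I, X i ω < (1/2) * S} ≤ μ {ω | ENNReal.ofReal (S/2) ≤ Y ω} := by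
    apply measure_mono_ae
    filter_upwards [hincl] with ω h hω
    exact h hω
  have hc0 : ENNReal.ofReal (S/2) ≠ 0 := by
    simp [ENNReal.ofReal_eq_zero, not_le]
    linarith
  have hct : ENNReal.ofReal (S/2) ≠ ∞ := ENNReal.ofReal_ne_top
  have hmarkov : μ {ω | ENNReal.ofReal (S/2) ≤ Y ω}
      ≤ (∫⁻ ω, Y ω ∂μ) / ENNReal.ofReal (S/2) :=
    meas_ge_le_lintegral_div hYmeas.aemeasurable hc0 hct
  have hfinal : (ε * ENNReal.ofReal S) / ENNReal.ofReal (S/2) = 2 * ε := by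
    have hSe : ENNReal.ofReal S = ENNReal.ofReal (S/2) * 2 := by
      rw [← ENNReal.ofReal_ofNat, ← ENNReal.ofReal_mul (by linarith)]
      norm_num
    rw [hSe, show ε * (ENNReal.ofReal (S/2) * 2) = (2 * ε) * ENNReal.ofReal (S/2) by ring,
      mul_div_assoc, ENNReal.div_self hc0 hct, mul_one]
  calc μ {ω | ∑ i ∈ I, X i ω < (1/2) * S}
      ≤ μ {ω | ENNReal.ofReal (S/2) ≤ Y ω} := hmono
    _ ≤ (∫⁻ ω, Y ω ∂μ) / ENNReal.ofReal (S/2) := hmarkov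
    _ ≤ (ε * ENNReal.ofReal S) / ENNReal.ofReal (S/2) := ENNReal.div_le_div_right hint _
    _ = 2 * ε := hfinal
end
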